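/- For every integer N ≥ 4 and every real p with 1/2 < p ≤ 1, d1(N, p) < 0. -/
import Mathlib


/-- The quantity `d1(N, p)`. -/
noncomputable def d1 (N : ℕ) (p : ℝ) : ℝ :=
  -(N : ℝ) ^ 4 * (1 - 2 * p + 2 * p ^ 2) ^ 2
    + (N : ℝ) ^ 3 * (1 - 6 * p + 17 * p ^ 2 - 22 * p ^ 3 + 16 * p ^ 4)
    + (N : ℝ) ^ 2 * (-1 + 4 * p - 17 * p ^ 2 + 29 * p ^ 3 - 26 * p ^ 4)
    + 2 * (N : ℝ) * p * (-1 + 6 * p - 12 * p ^ 2 + 10 * p ^ 3)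
    + (p - 4 * p ^ 2 + 9 * p ^ 3 - 6 * p ^ 4)

/-- The quantity `d2(N, p)`. -/
noncomputable def d2 (N : ℕ) (p : ℝ) : ℝ :=
  (N : ℝ) ^ 4 * (-1 + 4 * p - 12 * p ^ 2 + 16 * p ^ 3 - 8 * p ^ 4)
    + (N : ℝ) ^ 3 * p * (-4 + 31 * p - 56 * p ^ 2 + 34 * p ^ 3)
    + (N : ℝ) ^ 2 * (p - 33 * p ^ 2 + 77 * p ^ 3 - 52 * p ^ 4)
    + (N : ℝ) * p * (-1 + 22 * p - 52 * p ^ 2 + 32 * p ^ 3)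
    + (p - 8 * p ^ 2 + 15 * p ^ 3 - 6 * p ^ 4)

/-- The quantity `d3(N, p)`. -/
noncomputable def d3 (N : ℕ) (p : ℝ) : ℝ :=
  (N : ℝ) * (p - 1) *
    (p - 12 * p ^ 3 + 4 * (N : ℝ) ^ 3 * p * (1 - 2 * p + 2 * p ^ 2)
      + (N : ℝ) * p * (1 - 12 * p + 33 * p ^ 2)
      - (N : ℝ) ^ 2 * (1 + 4 * p - 19 * p ^ 2 + 29 * p ^ 3))

set_option maxHeartbeats 1000000 in
theorem stmt16 (N : ℕ) (hN : 4 ≤ N) (p : ℝ) (hp : 1 / 2 < p) (hp1 : p ≤ 1) :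
    d1 N p < 0 := by
  have ha : (0:ℝ) ≤ (N:ℝ) - 4 := by
    have : (4:ℝ) ≤ (N:ℝ) := by exact_mod_cast hN
    linarith
  set a : ℝ := (N:ℝ) - 4 with hadef
  set q : ℝ := 2 * p - 1 with hqdef
  have hq : 0 < q := by simp only [hqdef]; linarith
  have hq1 : q ≤ 1 := by simp only [hqdef]; linarith
  have hq2 : q ^ 2 ≤ q := by nlinarith
  have hq3 : q ^ 3 ≤ q ^ 2 := by nlinarith
  have hq4 : q ^ 4 ≤ q ^ 3 := by nlinarith
  have hsum : d1 N p =
      (-(1 + 2 * q ^ 2 + q ^ 4) / 4) * a ^ 4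
      + (-7/2 + 5/4 * q - 6 * q ^ 2 + 5/4 * q ^ 3 - 3 * q ^ 4) * a ^ 3
      + (-77/4 + 103/8 * q - 217/8 * q ^ 2 + 97/8 * q ^ 3 - 109/8 * q ^ 4) * a ^ 2
      + (-199/4 + 44 * q - 111/2 * q ^ 2 + 39 * q ^ 3 - 111/4 * q ^ 4) * a
      + (-203/4 + 403/8 * q - 351/8 * q ^ 2 + 333/8 * q ^ 3 - 171/8 * q ^ 4) := by
    simp only [d1, hadef, hqdef]; ring
  clear_value a q
  have hc4 : (-(1 + 2 * q ^ 2 + q ^ 4) / 4) ≤ 0 := by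
    have : (0:ℝ) ≤ 1 + 2 * q ^ 2 + q ^ 4 := by positivity
    linarith
  have hc3 : (-7/2 + 5/4 * q - 6 * q ^ 2 + 5/4 * q ^ 3 - 3 * q ^ 4) ≤ 0 := by nlinarith [hq2, hq3, hq4, sq_nonneg q, hq.le, hq1]
  have hc2 : (-77/4 + 103/8 * q - 217/8 * q ^ 2 + 97/8 * q ^ 3 - 109/8 * q ^ 4) ≤ 0 := by nlinarith [hq2, hq3, hq4, sq_nonneg q, hq.le, hq1]
  have hc1 : (-199/4 + 44 * q - 111/2 * q ^ 2 + 39 * q ^ 3 - 111/4 * q ^ 4) ≤ 0 := by nlinarith [hq2, hq3, hq4, sq_nonneg q, hq.le, hq1]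
  have hc0 : (-203/4 + 403/8 * q - 351/8 * q ^ 2 + 333/8 * q ^ 3 - 171/8 * q ^ 4) < 0 := by nlinarith [hq2, hq3, hq4, sq_nonneg q, hq.le, hq1]
  have h4 : (0:ℝ) ≤ a ^ 4 := by positivity
  have h3 : (0:ℝ) ≤ a ^ 3 := by positivity
  have h2 : (0:ℝ) ≤ a ^ 2 := by positivity
  rw [hsum]
  linarith [mul_nonpos_of_nonpos_of_nonneg hc4 h4, mul_nonpos_of_nonpos_of_nonneg hc3 h3,
    mul_nonpos_of_nonpos_of_nonneg hc2 h2, mul_nonpos_of_nonpos_of_nonneg hc1 ha]
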